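/- Every symmetric matrix (real or complex) is similar to its transpose via a symmetric similarity; more generally, every square matrix A ∈ ℂ^{n×n} is similar to its transpose Aᵀ, and a similarity S with S·A·S⁻¹ = Aᵀ can be chosen symmetric: S = Sᵀ. -/

import Mathlib

/-!
Through `A`, the space `Kⁿ` becomes a finitely generated torsion `K[X]`-module, hence a direct sum
of cyclic modules `K[X] ⧸ (q)`. On such a quotient ring, `(a, b) ↦` (coefficient of
`X ^ (deg q - 1)` in the remainder of `a * b` modulo `q`) is a nondegenerate symmetric form, and
every scalar acts self-adjointly on it because it only depends on the product `a * b`. The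
orthogonal sum of these forms is a nondegenerate symmetric form `B` with `B (A x) y = B x (A y)`,
and its Gram matrix `S` is symmetric, invertible and satisfies `Aᵀ * S = S * A`.
-/

open Polynomial LinearMap
open LinearMap (BilinForm)
open scoped Matrix

section

variable (K R : Type*) [CommRing K] [CommRing R]

def HasSelfAdjointSymmForm (M : Type*) [AddCommGroup M] [Module K M] [SMul R M] : Prop :=
  ∃ B : BilinForm K M, B.IsSymm ∧ B.Nondegenerate ∧
    ∀ (r : R) (x y : M), B (r • x) y = B x (r • y)

variable {K R}

namespace HasSelfAdjointSymmForm

theorem of_linearEquiv [Algebra K R] {M N : Type*} [AddCommGroup M] [Module K M] [Module R M]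
    [IsScalarTower K R M] [AddCommGroup N] [Module K N] [Module R N] [IsScalarTower K R N]
    (e : M ≃ₗ[R] N) (h : HasSelfAdjointSymmForm K R N) : HasSelfAdjointSymmForm K R M := by
  obtain ⟨B, hsymm, hnondeg, hself⟩ := h
  refine ⟨BilinForm.congr (e.restrictScalars K).symm B, ⟨fun x y => hsymm.eq (e x) (e y)⟩,
    (BilinForm.nondegenerate_congr_iff _).2 hnondeg, fun r x y => ?_⟩
  simpa using hself r (e x) (e y)

theorem pi {ι : Type*} [Fintype ι] {M : ι → Type*} [∀ i, AddCommGroup (M i)]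
    [∀ i, Module K (M i)] [∀ i, Module R (M i)] (h : ∀ i, HasSelfAdjointSymmForm K R (M i)) :
    HasSelfAdjointSymmForm K R (∀ i, M i) := by
  classical
  choose B hsymm hnondeg hself using h
  set B' : BilinForm K (∀ i, M i) := ∑ i, (B i).compl₁₂ (proj i) (proj i)
  have hB'symm : B'.IsSymm := ⟨fun x y => by simp [B', (hsymm _).eq (x _)]⟩
  refine ⟨B', hB'symm, hB'symm.isRefl.nondegenerate_iff_separatingLeft.2 fun x hx => ?_,
    fun r x y => by simp [B', hself]⟩
  funext i
  refine (hnondeg i).1 (x i) fun z => ?_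
  have hxi := hx (Pi.single i z)
  simp only [B', coe_sum, Finset.sum_apply, compl₁₂_apply, coe_proj, Function.eval] at hxi
  rwa [Fintype.sum_eq_single i fun j hj => by simp [Pi.single_eq_of_ne hj], Pi.single_eq_same]
    at hxi

theorem of_functional [Algebra K R] {A : Type*} [CommRing A] [Algebra K A] [Algebra R A]
    [IsScalarTower K R A] (φ : A →ₗ[K] K) (hφ : ∀ a ≠ 0, ∃ b, φ (a * b) ≠ 0) :
    HasSelfAdjointSymmForm K R A := by
  have hsymm : BilinForm.IsSymm ((mul K A).compr₂ φ) := ⟨fun x y => by simp [mul_comm]⟩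
  refine ⟨(mul K A).compr₂ φ, hsymm, hsymm.isRefl.nondegenerate_iff_separatingLeft.2
    fun a ha => by_contra fun h => (hφ a h).elim fun b hb => hb (ha b), fun r x y => ?_⟩
  simp [Algebra.smul_def, mul_assoc, mul_left_comm]

end HasSelfAdjointSymmForm

end

theorem AdjoinRoot.exists_coeff_modByMonicHom_mul_ne_zero {K : Type*} [Field K] {q : K[X]}
    (hq : q.Monic) {a : AdjoinRoot q} (ha : a ≠ 0) :
    ∃ b, (modByMonicHom hq (a * b)).coeff (q.natDegree - 1) ≠ 0 := by
  induction a using AdjoinRoot.induction_on with | ih p => ?_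
  set r := p %ₘ q
  have hr : mk q r = mk q p := mk_leftInverse hq (mk q p)
  have hr0 : r ≠ 0 := fun h => ha (by rw [← hr, h, map_zero])
  have hrq : r.natDegree < q.natDegree :=
    natDegree_lt_natDegree hr0 (degree_modByMonic_lt p hq)
  -- shift the leading coefficient of the reduced representative `r` into degree `deg q - 1`
  set k := q.natDegree - 1 - r.natDegree
  have hdeg : r.natDegree + k = q.natDegree - 1 := by omega
  have hreduced : r * X ^ k %ₘ q = r * X ^ k := by
    rw [modByMonic_eq_self_iff hq]
    apply degree_lt_degree
    rw [natDegree_mul_X_pow k hr0]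
    omega
  refine ⟨mk q (X ^ k), ?_⟩
  rw [← hr, ← map_mul, modByMonicHom_mk, hreduced, ← hdeg, coeff_mul_X_pow]
  exact leadingCoeff_ne_zero.2 hr0

theorem hasSelfAdjointSymmForm_quotient_span_singleton {K : Type*} [Field K] {q : K[X]}
    (hq : q ≠ 0) : HasSelfAdjointSymmForm K K[X] (K[X] ⧸ K[X] ∙ q) := by
  classical
  have hmonic : (normalize q).Monic := monic_normalize hq
  rw [show K[X] ∙ q = K[X] ∙ normalize q from
    Ideal.span_singleton_eq_span_singleton.2 (associated_normalize q)]
  exact HasSelfAdjointSymmForm.of_functional (R := K[X])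
    (A := K[X] ⧸ Ideal.span {normalize q}) ((lcoeff K _).comp (AdjoinRoot.modByMonicHom hmonic))
    fun a ha => AdjoinRoot.exists_coeff_modByMonicHom_mul_ne_zero hmonic ha

theorem hasSelfAdjointSymmForm_of_isTorsion {K M : Type*} [Field K] [AddCommGroup M]
    [Module K[X] M] [Module K M] [IsScalarTower K K[X] M] [Module.Finite K[X] M]
    (hM : Module.IsTorsion K[X] M) : HasSelfAdjointSymmForm K K[X] M := by
  obtain ⟨ι, _, p, hp, e, ⟨f⟩⟩ := Module.equiv_directSum_of_isTorsion hM
  exact .of_linearEquiv (f.trans (DirectSum.linearEquivFunOnFintype _ _ _))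
    (.pi fun i => hasSelfAdjointSymmForm_quotient_span_singleton (pow_ne_zero _ (hp i).ne_zero))

theorem Module.End.exists_isSymm_nondegenerate_isAdjointPair {K V : Type*} [Field K]
    [AddCommGroup V] [Module K V] [FiniteDimensional K V] (f : Module.End K V) :
    ∃ B : BilinForm K V, B.IsSymm ∧ B.Nondegenerate ∧ IsAdjointPair B B f f := by
  obtain ⟨B, hsymm, hnondeg, hself⟩ :=
    hasSelfAdjointSymmForm_of_isTorsion (AEval.isTorsion_of_finiteDimensional K V f)
  refine ⟨BilinForm.congr (AEval'.of f).symm B, ⟨fun x y => hsymm.eq _ _⟩,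
    (BilinForm.nondegenerate_congr_iff _).2 hnondeg, fun x y => ?_⟩
  simpa [AEval'.X_smul_of] using hself X (AEval'.of f x) (AEval'.of f y)

theorem Matrix.exists_isUnit_isSymm_mul_mul_inv_eq_transpose {K n : Type*} [Field K]
    [Fintype n] [DecidableEq n] (A : Matrix n n K) :
    ∃ S : Matrix n n K, IsUnit S ∧ S.IsSymm ∧ S * A * S⁻¹ = Aᵀ := by
  obtain ⟨B, hsymm, hnondeg, hadj⟩ :=
    Module.End.exists_isSymm_nondegenerate_isAdjointPair (toLin' A)
  set S := BilinForm.toMatrix' B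
  have hdet : IsUnit S.det := by
    rwa [isUnit_iff_ne_zero, ← nondegenerate_iff_det_ne_zero,
      BilinForm.nondegenerate_toMatrix'_iff]
  have hSA : Aᵀ * S = S * A := by
    rw [← toBilin'_toMatrix' B] at hadj
    exact (isAdjointPair_toLinearMap₂' S S A A).1 hadj
  refine ⟨S, (isUnit_iff_isUnit_det S).2 hdet,
    BilinForm.isSymm_toMatrix'_iff_isSymm.2 hsymm, ?_⟩
  rw [← hSA, mul_nonsing_inv_cancel_right _ _ hdet]

theorem similar_to_transpose_via_symmetric (n : ℕ) (A : Matrix (Fin n) (Fin n) ℂ) :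
    ∃ S : Matrix (Fin n) (Fin n) ℂ,
      IsUnit S ∧ S.IsSymm ∧ S * A * S⁻¹ = A.transpose :=
  Matrix.exists_isUnit_isSymm_mul_mul_inv_eq_transpose A
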